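/- arXiv:2006.12193 — 2 statements merged into one kernel-verified Lean document; each statement's English description precedes it below -/
import Mathlib

section
/- Let $G(x) = \sum_{i \ge 1} a_i x^i \in \widehat{\mathbb{Q}}[[x]]$ (with $\widehat{\mathbb{Q}} = \widehat{\mathbb{Z}} \otimes \mathbb{Q}$) such that $(\partial G)(x,y) = G(x+y-xy) - G(x) - G(y)$ has all coefficients in $\widehat{\mathbb{Z}}$. Set $b_i = i a_i$. Then $b_i - b_1 \in \widehat{\mathbb{Z}}$ for all $i \ge 1$. In particular, if $a_1 \in \widehat{\mathbb{Z}}$ then all $b_i \in \widehat{\mathbb{Z}}$. -/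
open TensorProduct

/-- The ring of profinite integers `Ẑ = lim ℤ/nℤ`, realized as the subring of
`∀ n : ℕ+, ZMod n` consisting of compatible families. -/
def ZHatSubring : Subring (∀ n : ℕ+, ZMod n) where
  carrier := {f | ∀ (d n : ℕ+) (h : (d : ℕ) ∣ (n : ℕ)), ZMod.castHom h (ZMod d) (f n) = f d}
  zero_mem' := by intro d n h; simp
  one_mem' := by intro d n h; simp only [Pi.one_apply, map_one]
  add_mem' := by intro a b ha hb d n h; simp [map_add, ha d n h, hb d n h]
  mul_mem' := by intro a b ha hb d n h; simp [map_mul, ha d n h, hb d n h]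
  neg_mem' := by intro a ha d n h; simp [map_neg, ha d n h]

/-- Profinite integers. -/
abbrev ZHat : Type := ZHatSubring

/-- `Q̂ = Ẑ ⊗ ℚ`. -/
abbrev QHat : Type := ℚ ⊗[ℤ] ZHat

/-- The canonical embedding `Ẑ → Q̂`. -/
noncomputable def toQHat : ZHat →+* QHat := Algebra.TensorProduct.includeRight.toRingHom

/-- Substitution of a multivariate power series with vanishing constant term into a
one-variable power series. -/
noncomputable def psubst {K : Type*} [CommRing K] {σ : Type*}
    (f : MvPowerSeries σ K) (G : PowerSeries K) : MvPowerSeries σ K :=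
  fun d => ∑ n ∈ Finset.range ((d.sum fun _ e => e) + 1),
    PowerSeries.coeff n G * MvPowerSeries.coeff d (f ^ n)

/-- The partial derivative `∂G(x,y) = G(x+y-xy) - G(x) - G(y) + G(0)` with respect to the
multiplicative formal group law. -/
noncomputable def deriv2 {K : Type*} [CommRing K] (G : PowerSeries K) :
    MvPowerSeries (Fin 2) K :=
  psubst (MvPowerSeries.X 0 + MvPowerSeries.X 1 - MvPowerSeries.X 0 * MvPowerSeries.X 1) G
    - psubst (MvPowerSeries.X 0) G - psubst (MvPowerSeries.X 1) G
    + MvPowerSeries.C (σ := Fin 2) (R := K) (PowerSeries.constantCoeff G)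

/-!
Write `x = X 0`, `y = X 1`. Modulo `x²` one has `(x + y - xy)ⁿ ≡ yⁿ + n x yⁿ⁻¹ (1 - y)`, so the
coefficient of `x yʲ` (for `j ≥ 1`) in `∂G` is `(j+1) a_{j+1} - j a_j = b_{j+1} - b_j`, while `G(x)`
and `G(y)` contribute nothing to it. The differences `bᵢ - b₁` then telescope.
-/

open MvPowerSeries

noncomputable section

variable {K : Type*} [CommRing K]

section MvCoeff

variable {σ : Type*}

lemma MvPowerSeries.coeff_X_mul_of_apply_eq_zero {d : σ →₀ ℕ} {s : σ} (hd : d s = 0)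
    (g : MvPowerSeries σ K) : coeff d (X s * g) = 0 := by
  classical
  rw [X_def, coeff_monomial_mul, if_neg]
  intro h
  simpa [hd] using h s

lemma MvPowerSeries.coeff_add_single_X_mul (d : σ →₀ ℕ) (s : σ) (g : MvPowerSeries σ K) :
    coeff (d + Finsupp.single s 1) (X s * g) = coeff d g := by
  rw [X_def, add_comm, coeff_add_monomial_mul, one_mul]

lemma coeff_psubst (f : MvPowerSeries σ K) (G : PowerSeries K) (d : σ →₀ ℕ) :
    coeff d (psubst f G) =
      ∑ n ∈ Finset.range (d.degree + 1), PowerSeries.coeff n G * coeff d (f ^ n) :=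
  rfl

lemma coeff_psubst_X_of_apply_ne_zero {d : σ →₀ ℕ} {s t : σ} (hts : t ≠ s) (hd : d t ≠ 0)
    (G : PowerSeries K) : coeff d (psubst (X s) G) = 0 := by
  classical
  rw [coeff_psubst]
  refine Finset.sum_eq_zero fun n _ => ?_
  rw [coeff_X_pow, if_neg, mul_zero]
  rintro rfl
  exact hd (Finsupp.single_eq_of_ne hts)

end MvCoeff

variable (K) in
def mulFGL : MvPowerSeries (Fin 2) K := X 0 + X 1 - X 0 * X 1

lemma coeff_single_one_succ_mulFGL_mul (j : ℕ) (g : MvPowerSeries (Fin 2) K) :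
    coeff (Finsupp.single 1 (j + 1)) (mulFGL K * g) = coeff (Finsupp.single 1 j) g := by
  have h0 : (Finsupp.single (1 : Fin 2) (j + 1)) 0 = 0 := by simp
  rw [mulFGL, sub_mul, add_mul, mul_assoc, map_sub, map_add,
    coeff_X_mul_of_apply_eq_zero h0, coeff_X_mul_of_apply_eq_zero h0, Finsupp.single_add,
    coeff_add_single_X_mul]
  ring

lemma coeff_zero_mulFGL_mul (g : MvPowerSeries (Fin 2) K) : coeff 0 (mulFGL K * g) = 0 := by
  rw [mulFGL, sub_mul, add_mul, mul_assoc]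
  simp only [map_sub, map_add, coeff_zero_X_mul, sub_zero, add_zero]

lemma coeff_single_zero_one_mulFGL_mul (g : MvPowerSeries (Fin 2) K) :
    coeff (Finsupp.single 0 1) (mulFGL K * g) = coeff 0 g := by
  have h1 : (Finsupp.single (0 : Fin 2) 1) 1 = 0 := by simp
  rw [mulFGL, sub_mul, add_mul, mul_assoc, map_sub, map_add, coeff_X_mul_of_apply_eq_zero h1,
    ← zero_add (Finsupp.single 0 1), coeff_add_single_X_mul, coeff_add_single_X_mul,
    coeff_zero_X_mul]
  ring

lemma coeff_xy_succ_mulFGL_mul (j : ℕ) (g : MvPowerSeries (Fin 2) K) :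
    coeff (Finsupp.single 0 1 + Finsupp.single 1 (j + 1)) (mulFGL K * g) =
      coeff (Finsupp.single 0 1 + Finsupp.single 1 j) g + coeff (Finsupp.single 1 (j + 1)) g
        - coeff (Finsupp.single 1 j) g := by
  have hx : Finsupp.single (0 : Fin 2) 1 + Finsupp.single 1 (j + 1) =
      Finsupp.single 1 j + Finsupp.single 1 1 + Finsupp.single 0 1 := by
    rw [add_comm, Finsupp.single_add]
  have hy : Finsupp.single (1 : Fin 2) j + Finsupp.single 1 1 + Finsupp.single 0 1 =
      Finsupp.single 0 1 + Finsupp.single 1 j + Finsupp.single 1 1 := by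
    abel
  rw [mulFGL, sub_mul, add_mul, mul_assoc, map_sub, map_add, hx, coeff_add_single_X_mul,
    coeff_add_single_X_mul, coeff_add_single_X_mul, hy, coeff_add_single_X_mul,
    ← Finsupp.single_add]
  ring

lemma coeff_single_one_mulFGL_pow (n j : ℕ) :
    coeff (Finsupp.single 1 j) (mulFGL K ^ n) = if n = j then 1 else 0 := by
  induction n generalizing j with
  | zero => cases j <;> simp [coeff_one]
  | succ n ih =>
    cases j with
    | zero => rw [Finsupp.single_zero, pow_succ', coeff_zero_mulFGL_mul, if_neg n.succ_ne_zero]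
    | succ j => simp only [pow_succ', coeff_single_one_succ_mulFGL_mul, ih, add_left_inj]

lemma coeff_xy_mulFGL_pow (n j : ℕ) :
    coeff (Finsupp.single 0 1 + Finsupp.single 1 j) (mulFGL K ^ n) =
      n * ((if n = j + 1 then 1 else 0) - if n = j then 1 else 0) := by
  induction n generalizing j with
  | zero => simp [coeff_one]
  | succ n ih =>
    cases j with
    | zero =>
      rw [Finsupp.single_zero, add_zero, pow_succ', coeff_single_zero_one_mulFGL_mul,
        ← Finsupp.single_zero 1, coeff_single_one_mulFGL_pow]
      split_ifs <;> first | omega | simp_all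
    | succ j =>
      rw [pow_succ', coeff_xy_succ_mulFGL_mul, ih, coeff_single_one_mulFGL_pow,
        coeff_single_one_mulFGL_pow]
      split_ifs <;> first | omega | (push_cast; ring)

lemma coeff_xy_psubst_mulFGL (G : PowerSeries K) (j : ℕ) :
    coeff (Finsupp.single 0 1 + Finsupp.single 1 j) (psubst (mulFGL K) G) =
      ((j + 1 : ℕ) : K) * PowerSeries.coeff (j + 1) G - (j : K) * PowerSeries.coeff j G := by
  simp only [coeff_psubst, coeff_xy_mulFGL_pow, map_add, Finsupp.degree_single,
    mul_sub, mul_ite, mul_one, mul_zero, Finset.sum_sub_distrib, Finset.sum_ite_eq',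
    Finset.mem_range]
  rw [if_pos (by omega), if_pos (by omega)]
  ring

lemma coeff_xy_deriv2 (G : PowerSeries K) {j : ℕ} (hj : j ≠ 0) :
    coeff (Finsupp.single 0 1 + Finsupp.single 1 j) (deriv2 G) =
      ((j + 1 : ℕ) : K) * PowerSeries.coeff (j + 1) G - (j : K) * PowerSeries.coeff j G := by
  classical
  have hx : (Finsupp.single (0 : Fin 2) 1 + Finsupp.single 1 j : Fin 2 →₀ ℕ) 1 ≠ 0 := by
    simpa using hj
  have hy : (Finsupp.single (0 : Fin 2) 1 + Finsupp.single 1 j : Fin 2 →₀ ℕ) 0 ≠ 0 := by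
    simp
  rw [deriv2, map_add, map_sub, map_sub, ← mulFGL, coeff_xy_psubst_mulFGL,
    coeff_psubst_X_of_apply_ne_zero Fin.zero_ne_one.symm hx,
    coeff_psubst_X_of_apply_ne_zero Fin.zero_ne_one hy, coeff_C, if_neg]
  · ring
  · simp [Finsupp.ext_iff]

lemma sub_mem_of_forall_succ_sub_mem {A S : Type*} [AddGroup A] [SetLike S A]
    [AddSubgroupClass S A] {s : S} {f : ℕ → A} {m : ℕ} (h : ∀ j, m ≤ j → f (j + 1) - f j ∈ s)
    {i : ℕ} (hi : m ≤ i) : f i - f m ∈ s := by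
  induction i, hi using Nat.le_induction with
  | base => simp
  | succ n hn ih => simpa using add_mem (h n hn) ih

end

theorem sub_linear_coeff_integral_general (G : PowerSeries QHat)
    (hint : ∀ d : Fin 2 →₀ ℕ, MvPowerSeries.coeff d (deriv2 G) ∈ Set.range toQHat) :
    (∀ i : ℕ, 1 ≤ i →
        (i : QHat) * PowerSeries.coeff i G - PowerSeries.coeff 1 G
          ∈ Set.range toQHat) ∧
    (PowerSeries.coeff 1 G ∈ Set.range toQHat →
        ∀ i : ℕ, (i : QHat) * PowerSeries.coeff i G ∈ Set.range toQHat) := by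
  simp only [← RingHom.coe_range, SetLike.mem_coe] at hint ⊢
  have hstep : ∀ j, 1 ≤ j → ((j + 1 : ℕ) : QHat) * PowerSeries.coeff (j + 1) G
      - (j : QHat) * PowerSeries.coeff j G ∈ toQHat.range := fun j hj =>
    coeff_xy_deriv2 G (Nat.one_le_iff_ne_zero.mp hj) ▸ hint _
  have hsub : ∀ i : ℕ, 1 ≤ i → (i : QHat) * PowerSeries.coeff i G - PowerSeries.coeff 1 G
      ∈ toQHat.range := fun i hi => by
    simpa only [Nat.cast_one, one_mul] using
      sub_mem_of_forall_succ_sub_mem (f := fun i : ℕ => (i : QHat) * PowerSeries.coeff i G)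
        hstep hi
  refine ⟨hsub, fun h1 i => ?_⟩
  rcases Nat.eq_zero_or_pos i with rfl | hi
  · rw [Nat.cast_zero, zero_mul]
    exact zero_mem _
  · simpa only [sub_add_cancel] using add_mem (hsub i hi) h1

/-- Let `G(x) = ∑_{i≥1} aᵢ xⁱ ∈ Q̂[[x]]` be such that `∂G(x,y) = G(x+y-xy) - G(x) - G(y)`
has all coefficients in `Ẑ`.  Setting `bᵢ = i·aᵢ`, one has `bᵢ - b₁ ∈ Ẑ` for all `i ≥ 1`;
in particular if `a₁ ∈ Ẑ` then all `bᵢ ∈ Ẑ`. -/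
theorem sub_linear_coeff_integral (G : PowerSeries QHat)
    (hG0 : PowerSeries.constantCoeff G = 0)
    (hint : ∀ d : Fin 2 →₀ ℕ, MvPowerSeries.coeff d (deriv2 G) ∈ Set.range toQHat) :
    (∀ i : ℕ, 1 ≤ i →
        (i : QHat) * PowerSeries.coeff i G - PowerSeries.coeff 1 G
          ∈ Set.range toQHat) ∧
    (PowerSeries.coeff 1 G ∈ Set.range toQHat →
        ∀ i : ℕ, (i : QHat) * PowerSeries.coeff i G ∈ Set.range toQHat) :=
  sub_linear_coeff_integral_general G hint
end

section
/- Suppose $R$ is a torsion-free commutative ring with no nontrivial $\mathbb{Z}$-divisible elements (i.e., no nonzero $r \in R$ is divisible by every positive integer), and let $K = R \otimes \mathbb{Q}$. Then for every $n \ge 1$, $x R[[x]] \cap \left(\sum_{0 < r < n} K \cdot \lg_r(x)\right) = 0$ inside $K[[x]]$, where $\lg_r(x) = \frac{1}{r!}(\log(1-x))^r$. -/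
/-!
The operator `Φ(F) = (X - 1) F'` sends `lg_{r+1}` to `lg_r` and `lg_1` to the constant `1`, and it
preserves `x R⟦x⟧` up to a constant. So if `G ∈ x R⟦x⟧` lies in the span of `lg_1, …, lg_n`, then
`Φ G - Φ G (0)` lies in `x R⟦x⟧` and in the span of `lg_1, …, lg_{n-1}`, hence vanishes by induction.
This leaves `(X - 1) G' = c` with `c ∈ R`, i.e. `(i + 1) gᵢ₊₁ = -c` for all `i`: then `c` is divisible
by every positive integer, so `c = 0`, and torsion-freeness gives `G = 0`.
-/

open TensorProduct

variable (R : Type*) [CommRing R]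

/-- The canonical map `R → K = R ⊗ ℚ`. -/
noncomputable def toK : R →+* ℚ ⊗[ℤ] R := Algebra.TensorProduct.includeRight.toRingHom

/-- The formal power series `log(1-x) = -∑_{i≥1} xⁱ/i` over `K = R ⊗ ℚ`. -/
noncomputable def logOneSub : PowerSeries (ℚ ⊗[ℤ] R) :=
  PowerSeries.mk fun i => if i = 0 then 0 else algebraMap ℚ (ℚ ⊗[ℤ] R) (-(1 / (i : ℚ)))

/-- `lg_r(x) = (1/r!) (log(1-x))^r` over `K = R ⊗ ℚ`. -/
noncomputable def lg (r : ℕ) : PowerSeries (ℚ ⊗[ℤ] R) :=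
  ((r.factorial : ℚ)⁻¹) • (logOneSub R) ^ r

open PowerSeries

section

variable {A : Type*} [CommRing A]

lemma coeff_eq_neg_of_X_sub_one_mul_eq_C {H : A⟦X⟧} {c : A} (h : (X - 1) * H = C c) (i : ℕ) :
    coeff i H = -c := by
  have hH : H = mk 1 * C (-c) :=
    calc H = mk 1 * (1 - X) * H := by rw [mk_one_mul_one_sub_eq_one, one_mul]
      _ = mk 1 * C (-c) := by rw [mul_assoc, ← neg_sub, neg_mul, h, map_neg]
  rw [hH, coeff_mul_C, coeff_mk, Pi.one_apply, one_mul]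

lemma map_derivative {B : Type*} [CommRing B] (f : A →+* B) (F : A⟦X⟧) :
    map f (d⁄dX A F) = d⁄dX B (map f F) := by
  ext n
  simp only [coeff_map, coeff_derivative, map_mul, map_add, map_natCast, map_one]

lemma sub_C_constantCoeff_mem_span {S : Set A⟦X⟧} (hS : ∀ s ∈ S, constantCoeff s = 0)
    {F : A⟦X⟧} (hF : F ∈ Submodule.span A (insert 1 S)) :
    F - C (constantCoeff F) ∈ Submodule.span A S := by
  obtain ⟨a, z, hz, rfl⟩ := Submodule.mem_span_insert.1 hF
  have hz0 : constantCoeff z = 0 := by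
    have hle : Submodule.span A S ≤ LinearMap.ker (coeff 0) :=
      Submodule.span_le.2 fun s hs => by simpa using hS s hs
    simpa using hle hz
  rwa [map_add, hz0, smul_eq_C_mul, mul_one, constantCoeff_C, add_zero, add_sub_cancel_left]

end

lemma toK_injective (htf : ∀ (k : ℤ), k ≠ 0 → ∀ r : R, k • r = 0 → r = 0) :
    Function.Injective (toK R) := by
  have : IsLocalizedModule (nonZeroDivisors ℤ) (TensorProduct.mk ℤ ℚ R 1) :=
    (isLocalizedModule_iff_isBaseChange (nonZeroDivisors ℤ) ℚ _).2
      (TensorProduct.isBaseChange (R := ℤ) (M := R) (S := ℚ))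
  rw [injective_iff_map_eq_zero]
  intro r hr
  replace hr : TensorProduct.mk ℤ ℚ R 1 r = 0 := hr
  obtain ⟨s, hs⟩ := (IsLocalizedModule.eq_zero_iff (nonZeroDivisors ℤ) _).1 hr
  exact htf s (nonZeroDivisors.coe_ne_zero s) r hs

lemma eq_zero_of_X_sub_one_mul_derivative_eq_C
    (htf : ∀ (k : ℤ), k ≠ 0 → ∀ r : R, k • r = 0 → r = 0)
    (hdiv : ∀ r : R, (∀ k : ℕ, 0 < k → ∃ s : R, r = k • s) → r = 0)
    {G : R⟦X⟧} (hG0 : constantCoeff G = 0) {c : R} (h : (X - 1) * d⁄dX R G = C c) : G = 0 := by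
  have hcoeff (i : ℕ) : (i + 1) • coeff (i + 1) G = -c := by
    rw [← coeff_eq_neg_of_X_sub_one_mul_eq_C h i, coeff_derivative, nsmul_eq_mul, mul_comm,
      Nat.cast_succ]
  have hc : -c = 0 := hdiv _ fun k hk => by
    obtain ⟨i, rfl⟩ := Nat.exists_eq_succ_of_ne_zero hk.ne'
    exact ⟨_, (hcoeff i).symm⟩
  ext (_ | i)
  · simpa using hG0
  · refine htf (i + 1) (by omega) _ ?_
    have hi := hcoeff i
    rw [hc, ← natCast_zsmul] at hi
    exact_mod_cast hi

local notation "K" => ℚ ⊗[ℤ] R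

lemma constantCoeff_logOneSub : constantCoeff (logOneSub R) = 0 := by
  rw [logOneSub, ← coeff_zero_eq_constantCoeff_apply, coeff_mk, if_pos rfl]

lemma derivative_logOneSub : d⁄dX K (logOneSub R) = -mk 1 := by
  ext n
  have hcast : (n : K) + 1 = algebraMap ℚ K (n + 1) := by rw [map_add, map_natCast, map_one]
  rw [map_neg, coeff_mk, Pi.one_apply, coeff_derivative, logOneSub, coeff_mk,
    if_neg n.succ_ne_zero, hcast, ← map_mul, ← map_one (algebraMap ℚ K), ← map_neg]
  congr 1
  push_cast
  field_simp

lemma X_sub_one_mul_derivative_logOneSub : (X - 1) * d⁄dX K (logOneSub R) = 1 := by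
  rw [derivative_logOneSub]
  linear_combination mk_one_mul_one_sub_eq_one K

lemma lg_zero : lg R 0 = 1 := by
  simp [lg]

lemma constantCoeff_lg {r : ℕ} (hr : r ≠ 0) : constantCoeff (lg R r) = 0 := by
  rw [lg, constantCoeff_smul, map_pow, constantCoeff_logOneSub, zero_pow hr, smul_zero]

lemma X_sub_one_mul_derivative_lg_succ (r : ℕ) :
    (X - 1) * d⁄dX K (lg R (r + 1)) = lg R r := by
  have hfac : ((r + 1).factorial : ℚ)⁻¹ * (r + 1 : ℕ) = (r.factorial : ℚ)⁻¹ := by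
    rw [Nat.factorial_succ]
    push_cast
    field_simp
  rw [lg, lg, Derivation.map_smul_of_tower, derivative_pow, mul_smul_comm, Nat.add_sub_cancel,
    mul_left_comm, X_sub_one_mul_derivative_logOneSub, mul_one, ← nsmul_eq_mul,
    ← Nat.cast_smul_eq_nsmul ℚ, smul_smul, hfac]

lemma X_sub_one_mul_derivative_mem_span {n : ℕ} {F : K⟦X⟧}
    (hF : F ∈ Submodule.span K (lg R '' Set.Ioo 0 (n + 1))) :
    (X - 1) * d⁄dX K F ∈ Submodule.span K (insert 1 (lg R '' Set.Ioo 0 n)) := by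
  refine Submodule.span_mono ?_
    (Submodule.apply_mem_span_image_of_mem_span ((X - 1 : K⟦X⟧) • d⁄dX K).toLinearMap hF)
  rintro _ ⟨_, ⟨r, ⟨hr0, hrn⟩, rfl⟩, rfl⟩
  obtain ⟨k, rfl⟩ := Nat.exists_eq_succ_of_ne_zero hr0.ne'
  change (X - 1) * d⁄dX K (lg R (k + 1)) ∈ _
  rw [X_sub_one_mul_derivative_lg_succ]
  rcases k.eq_zero_or_pos with rfl | hk
  · exact lg_zero R ▸ Set.mem_insert _ _
  · exact Set.mem_insert_of_mem _ ⟨k, ⟨hk, by omega⟩, rfl⟩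

lemma eq_zero_of_map_mem_span_lg
    (htf : ∀ (k : ℤ), k ≠ 0 → ∀ r : R, k • r = 0 → r = 0)
    (hdiv : ∀ r : R, (∀ k : ℕ, 0 < k → ∃ s : R, r = k • s) → r = 0)
    (n : ℕ) {G : R⟦X⟧} (hG0 : constantCoeff G = 0)
    (hmem : map (toK R) G ∈ Submodule.span K (lg R '' Set.Ioo 0 n)) : G = 0 := by
  induction n generalizing G with
  | zero =>
    rw [Set.Ioo_self, Set.image_empty, Submodule.span_empty, Submodule.mem_bot] at hmem
    exact map_injective _ (toK_injective R htf) (hmem.trans (map_zero _).symm)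
  | succ n ih =>
    set F := (X - 1) * d⁄dX R G
    have hF : map (toK R) F = (X - 1) * d⁄dX K (map (toK R) G) := by
      rw [map_mul, map_sub, map_X, map_one, map_derivative]
    have hF₀ : F - C (constantCoeff F) = 0 := by
      refine ih (by simp) ?_
      rw [map_sub, map_C, ← coeff_zero_eq_constantCoeff_apply, ← coeff_map,
        coeff_zero_eq_constantCoeff_apply, hF]
      refine sub_C_constantCoeff_mem_span ?_ (X_sub_one_mul_derivative_mem_span R hmem)
      rintro _ ⟨r, hr, rfl⟩
      exact constantCoeff_lg R hr.1.ne'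
    exact eq_zero_of_X_sub_one_mul_derivative_eq_C R htf hdiv hG0 (sub_eq_zero.1 hF₀)

theorem inter_span_lg_eq_zero
    (htf : ∀ (k : ℤ), k ≠ 0 → ∀ r : R, k • r = 0 → r = 0)
    (hdiv : ∀ r : R, (∀ k : ℕ, 0 < k → ∃ s : R, r = k • s) → r = 0)
    (n : ℕ) (G : PowerSeries R)
    (hG0 : PowerSeries.constantCoeff G = 0)
    (hmem : PowerSeries.map (toK R) G
      ∈ Submodule.span (ℚ ⊗[ℤ] R) (lg R '' Set.Ioo 0 n)) :
    PowerSeries.map (toK R) G = 0 := by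
  rw [eq_zero_of_map_mem_span_lg R htf hdiv n hG0 hmem, map_zero]
end
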